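/- If m ≥ 4 (so m − 2 ∉ −2ℕ), the Bessel–Fischer product is non-degenerate on the quotient F = ℂ[z_0,…,z_{m−1}]/⟨R²⟩: if ⟨p, q⟩_B = 0 for all q ∈ F then p = 0 in F. -/

import Mathlib

open MvPolynomial

noncomputable section

/-- Complex polynomials in the variables `z_0, …, z_{m−1}`. -/
abbrev Pm (m : ℕ) := MvPolynomial (Fin m) ℂ

/-- The diagonal entries of the bilinear form `β`: `β_{00} = −1`, `β_{kk} = 1` for `k ≥ 1`. -/
def sgn (m : ℕ) (i : Fin m) : ℂ := if (i : ℕ) = 0 then -1 else 1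

/-- The plain partial derivative `∂^i` as a linear operator. -/
def DOp (m : ℕ) (i : Fin m) : Module.End ℂ (Pm m) := (pderiv i).toLinearMap

/-- The lowered partial derivative `∂_i = ∑_k β_{ik} ∂^k`. -/
def dlow (m : ℕ) (i : Fin m) : Module.End ℂ (Pm m) := sgn m i • DOp m i

/-- Multiplication by the variable `z_i`. -/
def mulX (m : ℕ) (i : Fin m) : Module.End ℂ (Pm m) := LinearMap.mulLeft ℂ (X i)

/-- The Euler operator `E = ∑_{i,j} β^{ij} z_i ∂_j`. -/
def EOp (m : ℕ) : Module.End ℂ (Pm m) := ∑ i, sgn m i • (mulX m i * dlow m i)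

/-- The Laplacian `Δ = ∑_{i,j} β^{ij} ∂_i ∂_j`. -/
def LapOp (m : ℕ) : Module.End ℂ (Pm m) := ∑ i, sgn m i • (dlow m i * dlow m i)

/-- The Bessel operator `B(z_i) = (m − 2 + 2E)∂_i − z_i Δ` (parameter `λ = 2 − m`). -/
def BOp (m : ℕ) (i : Fin m) : Module.End ℂ (Pm m) :=
  (((m : ℂ) - 2) • (1 : Module.End ℂ (Pm m)) + (2 : ℂ) • EOp m) * dlow m i
    - mulX m i * LapOp m

/-- The modified Bessel operator: `B̃(z_0) = −B(z_0)`, `B̃(z_k) = B(z_k)` for `k ≥ 1`. -/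
def BtOp (m : ℕ) (i : Fin m) : Module.End ℂ (Pm m) := sgn m i • BOp m i

/-- The Bessel–Fischer product `⟨p,q⟩_B := (p(B̃) q̄)(0)`: substitute the modified
Bessel operators for the variables of `p`, apply to the coefficient-conjugate of `q`,
and evaluate at `0`. -/
def BF (m : ℕ) (p q : Pm m) : ℂ :=
  eval (0 : Fin m → ℂ)
    (((∑ α ∈ p.support, p.coeff α • (List.ofFn fun i : Fin m => (BtOp m i) ^ (α i)).prod) :
        Module.End ℂ (Pm m)) (map (starRingEnd ℂ) q))

/-- The angular momentum operator `L_{ij} = z_i ∂_j − z_j ∂_i`. -/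
def LOp (m : ℕ) (i j : Fin m) : Module.End ℂ (Pm m) :=
  mulX m i * dlow m j - mulX m j * dlow m i

/-- The squared radial coordinate `R² = ∑_{i,j} β^{ij} z_i z_j`. -/
def R2 (m : ℕ) : Pm m := ∑ i, sgn m i • (X i * X i)


/-!
For a null vector `v` (`R²(v) = 0`) and `η = (v|z)`, the modified Bessel operators act by
`B̃(z_i) ηʲ = j (m + 2j − 4) v_i ηʲ⁻¹`, so `⟨p, (v̄|z)ᵏ⟩_B` is `∏_{j ≤ k} j (m + 2j − 4)`
times the degree-`k` homogeneous part of `p` evaluated at `v`. For `m ≥ 3` these factors do not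
vanish, so a `p` orthogonal to everything vanishes on the null cone `{R² = 0}`. Dividing by
`R²`, which is monic of degree two in `z_0`, leaves a remainder `a z_0 + b` that vanishes at
`z_0 = ±√(z_1² + ⋯ + z_{m−1}²)`, hence `a = b = 0`.
-/

lemma sgn_mul_self (m : ℕ) (i : Fin m) : sgn m i * sgn m i = 1 := by
  unfold sgn; split <;> norm_num

lemma eval_R2 (m : ℕ) (v : Fin m → ℂ) : eval v (R2 m) = ∑ i, sgn m i * v i ^ 2 := by
  simp [R2, sq]

lemma dlow_apply {m : ℕ} (i : Fin m) (f : Pm m) : dlow m i f = sgn m i • pderiv i f := rfl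

lemma mulX_apply {m : ℕ} (i : Fin m) (f : Pm m) : mulX m i f = X i * f := rfl

/-- On a null vector `c`, `B̃(z_i) (c|z)^j = j (m + 2j - 4) c_i (c|z)^(j-1)`: the Laplacian
kills `(c|z)^j`, and `m - 2 + 2E` acts on `(c|z)^(j-1)` by `m - 2 + 2(j - 1)`. -/
def besselCoeff (m j : ℕ) : ℂ := j * (m + 2 * j - 4)

def besselProd (m j n : ℕ) : ℂ := ∏ t ∈ Finset.range n, besselCoeff m (j - t)

lemma besselProd_add (m j a b : ℕ) :
    besselProd m j (a + b) = besselProd m j a * besselProd m (j - a) b := by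
  rw [besselProd, Finset.prod_range_add]
  congr 1
  exact Finset.prod_congr rfl fun t _ => by rw [Nat.sub_sub]

lemma besselProd_eq_zero_of_lt {m k n : ℕ} (h : k < n) : besselProd m k n = 0 :=
  Finset.prod_eq_zero (Finset.mem_range.mpr h) (by simp [besselCoeff])

lemma besselProd_self_ne_zero {m : ℕ} (hm : 3 ≤ m) (k : ℕ) : besselProd m k k ≠ 0 := by
  refine Finset.prod_ne_zero_iff.mpr fun t ht => ?_
  rw [Finset.mem_range] at ht
  have hcast : (m + 2 * (k - t : ℕ) - 4 : ℂ) = (m + 2 * (k - t) - 4 : ℕ) := by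
    push_cast [Nat.cast_sub (by omega : 4 ≤ m + 2 * (k - t))]
    ring
  rw [besselCoeff, hcast]
  exact mul_ne_zero (by exact_mod_cast (by omega : k - t ≠ 0))
    (by exact_mod_cast (by omega : m + 2 * (k - t) - 4 ≠ 0))

def linearForm (m : ℕ) (c : Fin m → ℂ) : Pm m := ∑ i, C (c i) * X i

section LinearForm

variable {m : ℕ} {c : Fin m → ℂ}

lemma map_conj_linearForm :
    map (starRingEnd ℂ) (linearForm m c) = linearForm m fun i => starRingEnd ℂ (c i) := by
  simp [linearForm]

lemma eval_linearForm (v : Fin m → ℂ) : eval v (linearForm m c) = ∑ i, c i * v i := by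
  simp [linearForm]

lemma pderiv_linearForm (i : Fin m) : pderiv i (linearForm m c) = C (c i) := by
  classical
  simp [linearForm, pderiv_X, Pi.single_apply]

lemma dlow_linearForm_pow (i : Fin m) (j : ℕ) :
    dlow m i (linearForm m c ^ j) = (sgn m i * (j * c i)) • linearForm m c ^ (j - 1) := by
  rw [dlow_apply, Derivation.leibniz_pow, pderiv_linearForm]
  simp only [smul_eq_C_mul, nsmul_eq_mul, smul_eq_mul, map_mul, map_natCast]
  ring

lemma EOp_linearForm_pow (j : ℕ) :
    EOp m (linearForm m c ^ j) = (j : ℂ) • linearForm m c ^ j := by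
  cases j with
  | zero => simp [EOp, dlow_apply]
  | succ j =>
    have hterm (i : Fin m) : (sgn m i • (mulX m i * dlow m i)) (linearForm m c ^ (j + 1)) =
        ((j + 1 : ℕ) : ℂ) • (C (c i) * X i * linearForm m c ^ j) := by
      rw [LinearMap.smul_apply, Module.End.mul_apply, dlow_linearForm_pow, map_smul, mulX_apply,
        smul_smul, ← mul_assoc, sgn_mul_self, one_mul, Nat.add_sub_cancel]
      simp only [smul_eq_C_mul, map_mul]
      ring
    rw [EOp, LinearMap.sum_apply, Finset.sum_congr rfl fun i _ => hterm i, ← Finset.smul_sum,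
      ← Finset.sum_mul, pow_succ']
    rfl

lemma LapOp_linearForm_pow (hc : eval c (R2 m) = 0) (j : ℕ) :
    LapOp m (linearForm m c ^ j) = 0 := by
  have hterm (i : Fin m) : (sgn m i • (dlow m i * dlow m i)) (linearForm m c ^ j) =
      ((j : ℂ) * (j - 1 : ℕ) * (sgn m i * c i ^ 2)) • linearForm m c ^ (j - 1 - 1) := by
    rw [LinearMap.smul_apply, Module.End.mul_apply, dlow_linearForm_pow, map_smul,
      dlow_linearForm_pow, smul_smul, smul_smul]
    congr 1
    linear_combination ((j : ℂ) * (j - 1 : ℕ) * c i ^ 2 * sgn m i) * sgn_mul_self m i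
  rw [eval_R2] at hc
  simp only [LapOp, LinearMap.sum_apply, hterm, ← Finset.sum_smul, ← Finset.mul_sum, hc,
    mul_zero, zero_smul]

lemma BtOp_linearForm_pow (hc : eval c (R2 m) = 0) (i : Fin m) (j : ℕ) :
    BtOp m i (linearForm m c ^ j) = (besselCoeff m j * c i) • linearForm m c ^ (j - 1) := by
  rw [BtOp, LinearMap.smul_apply, BOp, LinearMap.sub_apply, Module.End.mul_apply,
    Module.End.mul_apply, LapOp_linearForm_pow hc, map_zero, sub_zero, dlow_linearForm_pow,
    map_smul, LinearMap.add_apply, LinearMap.smul_apply, LinearMap.smul_apply,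
    Module.End.one_apply, EOp_linearForm_pow, besselCoeff]
  cases j with
  | zero => simp
  | succ j =>
    rw [Nat.add_sub_cancel]
    match_scalars
    linear_combination ((m + 2 * j - 2 : ℂ) * (j + 1) * c i) * sgn_mul_self m i

lemma BtOp_pow_linearForm_pow (hc : eval c (R2 m) = 0) (i : Fin m) (n j : ℕ) :
    (BtOp m i ^ n) (linearForm m c ^ j) =
      (besselProd m j n * c i ^ n) • linearForm m c ^ (j - n) := by
  induction n generalizing j with
  | zero => simp [besselProd]
  | succ n ih =>
    rw [pow_succ, Module.End.mul_apply, BtOp_linearForm_pow hc, map_smul, ih, smul_smul,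
      Nat.sub_sub, Nat.add_comm 1 n, Nat.add_comm n 1, besselProd_add]
    simp only [besselProd, Finset.range_one, Finset.prod_singleton, Nat.sub_zero]
    congr 1
    ring

lemma list_prod_BtOp_pow_linearForm_pow (hc : eval c (R2 m) = 0) (l : List (Fin m × ℕ))
    (j : ℕ) :
    (l.map fun q => BtOp m q.1 ^ q.2).prod (linearForm m c ^ j) =
      (besselProd m j (l.map Prod.snd).sum * (l.map fun q => c q.1 ^ q.2).prod) •
        linearForm m c ^ (j - (l.map Prod.snd).sum) := by
  induction l generalizing j with
  | nil => simp [besselProd]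
  | cons q l ih =>
    simp only [List.map_cons, List.prod_cons, List.sum_cons, Module.End.mul_apply, ih,
      map_smul, BtOp_pow_linearForm_pow hc, smul_smul, Nat.sub_sub, Nat.add_comm q.2,
      besselProd_add]
    congr 1
    ring

lemma eval_zero_ofFn_prod_BtOp_pow_linearForm_pow (hc : eval c (R2 m) = 0)
    (α : Fin m →₀ ℕ) (k : ℕ) :
    eval 0 ((List.ofFn fun i => BtOp m i ^ α i).prod (linearForm m c ^ k)) =
      if α.degree = k then besselProd m k k * ∏ i, c i ^ α i else 0 := by
  have hl : (List.ofFn fun i => BtOp m i ^ α i) =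
      (List.ofFn fun i => (i, α i)).map fun q => BtOp m q.1 ^ q.2 := by
    rw [List.map_ofFn]; rfl
  rw [hl, list_prod_BtOp_pow_linearForm_pow hc, List.map_ofFn, List.map_ofFn, List.prod_ofFn,
    smul_eval, map_pow, eval_linearForm]
  simp only [Function.comp_def, List.sum_ofFn, ← Finsupp.degree_eq_sum, Pi.zero_apply,
    mul_zero, Finset.sum_const_zero, zero_pow_eq, Nat.sub_eq_zero_iff_le]
  rcases lt_trichotomy α.degree k with hlt | rfl | hgt
  · simp [hlt.ne, hlt.not_ge]
  · simp
  · simp [hgt.ne', hgt.le, besselProd_eq_zero_of_lt hgt]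

end LinearForm

lemma BF_linearForm_conj_pow {m : ℕ} {v : Fin m → ℂ} (hv : eval v (R2 m) = 0) (p : Pm m)
    (k : ℕ) :
    BF m p (linearForm m (fun i => starRingEnd ℂ (v i)) ^ k) =
      besselProd m k k * eval v (homogeneousComponent k p) := by
  rw [BF, map_pow, map_conj_linearForm]
  simp only [Complex.conj_conj, LinearMap.sum_apply, LinearMap.smul_apply, map_sum, smul_eval,
    eval_zero_ofFn_prod_BtOp_pow_linearForm_pow hv, homogeneousComponent_apply,
    Finset.sum_filter, Finset.mul_sum]
  refine Finset.sum_congr rfl fun α _ => ?_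
  split_ifs
  · rw [eval_monomial, Finsupp.prod_pow]
    ring
  · rw [map_zero, mul_zero, mul_zero]

lemma eval_eq_zero_of_forall_BF_eq_zero {m : ℕ} (hm : 3 ≤ m) {p : Pm m}
    (h : ∀ q, BF m p q = 0) {v : Fin m → ℂ} (hv : eval v (R2 m) = 0) : eval v p = 0 := by
  rw [← sum_homogeneousComponent p, map_sum]
  refine Finset.sum_eq_zero fun k _ => ?_
  have hk := h (linearForm m (fun i => starRingEnd ℂ (v i)) ^ k)
  rw [BF_linearForm_conj_pow hv] at hk
  exact (mul_eq_zero.mp hk).resolve_left (besselProd_self_ne_zero hm k)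

section NullConeDivision

variable {σ K : Type*} [Field K] [IsAlgClosed K] [NeZero (2 : K)]

lemma eq_zero_of_forall_sq_eq_eval {S a b : MvPolynomial σ K} (hS : S ≠ 0)
    (h : ∀ x t, t ^ 2 = eval x S → eval x a * t + eval x b = 0) : a = 0 ∧ b = 0 := by
  have hsqrt : ∀ x, ∃ t : K, t ^ 2 = eval x S := fun x =>
    IsAlgClosed.exists_pow_nat_eq _ two_pos
  have hb : b = 0 := MvPolynomial.funext fun x => by
    obtain ⟨t, ht⟩ := hsqrt x
    have h₁ := h x t ht
    have h₂ := h x (-t) (by rw [neg_sq, ht])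
    have h2b : (2 : K) * eval x b = 0 := by linear_combination h₁ + h₂
    rw [map_zero]
    exact (mul_eq_zero.mp h2b).resolve_left (NeZero.ne 2)
  refine ⟨?_, hb⟩
  -- `a` vanishes where `S` does not, because `a * t = 0` with `t² = S`
  have haS : a * S = 0 := MvPolynomial.funext fun x => by
    obtain ⟨t, ht⟩ := hsqrt x
    have h₁ := h x t ht
    rw [hb, map_zero, add_zero] at h₁
    rw [map_zero, eval_mul, ← ht]
    linear_combination t * h₁
  exact (mul_eq_zero.mp haS).resolve_right hS

lemma X_sq_sub_C_dvd_of_forall_sq_eq_eval {S : MvPolynomial σ K} (hS : S ≠ 0)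
    {P : Polynomial (MvPolynomial σ K)}
    (h : ∀ x t, t ^ 2 = eval x S → (P.map (eval x)).eval t = 0) :
    Polynomial.X ^ 2 - Polynomial.C S ∣ P := by
  set M := Polynomial.X ^ 2 - Polynomial.C S
  have hM : M.Monic := Polynomial.monic_X_pow_sub_C S two_ne_zero
  rw [← Polynomial.modByMonic_eq_zero_iff_dvd hM]
  have hr : P %ₘ M = Polynomial.C ((P %ₘ M).coeff 1) * Polynomial.X
      + Polynomial.C ((P %ₘ M).coeff 0) := by
    apply Polynomial.eq_X_add_C_of_degree_le_one
    have := Polynomial.degree_modByMonic_lt P hM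
    rw [Polynomial.degree_X_pow_sub_C two_pos] at this
    exact Order.le_of_lt_succ (by exact_mod_cast this)
  have hcoeff := eq_zero_of_forall_sq_eq_eval hS fun x t ht => by
    have hP := h x t ht
    rw [← Polynomial.modByMonic_add_div P M, hr] at hP
    simpa [M, ht] using hP
  rw [hr, hcoeff.1, hcoeff.2]
  simp

end NullConeDivision

lemma finSuccEquiv_R2 (n : ℕ) :
    finSuccEquiv ℂ n (R2 (n + 1)) =
      -(Polynomial.X ^ 2 - Polynomial.C (∑ k : Fin n, X k * X k)) := by
  simp only [R2, sgn, Fin.val_eq_zero_iff, ite_smul, neg_smul, one_smul, Fin.sum_univ_succ,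
    ↓reduceIte, Fin.succ_ne_zero, map_add, map_neg, map_mul, finSuccEquiv_X_zero, map_sum,
    finSuccEquiv_X_succ, sq, neg_sub]
  ring

lemma mem_span_R2_of_forall_eval_eq_zero {m : ℕ} (hm : 2 ≤ m) {p : Pm m}
    (h : ∀ v, eval v (R2 m) = 0 → eval v p = 0) : p ∈ Ideal.span {R2 m} := by
  obtain ⟨n, rfl⟩ : ∃ n, m = n + 1 := ⟨m - 1, by omega⟩
  have hS : ∑ k : Fin n, X k * X k ≠ (0 : MvPolynomial (Fin n) ℂ) := fun h0 => by
    have := congrArg (eval fun _ => (1 : ℂ)) h0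
    simp only [map_sum, map_mul, eval_X, mul_one, Finset.sum_const, Finset.card_univ,
      Fintype.card_fin, nsmul_eq_mul, map_zero, Nat.cast_eq_zero] at this
    omega
  rw [Ideal.mem_span_singleton, ← map_dvd_iff (finSuccEquiv ℂ n), finSuccEquiv_R2]
  refine neg_dvd.mpr <| X_sq_sub_C_dvd_of_forall_sq_eq_eval hS fun x t ht => ?_
  rw [← eval_eq_eval_mv_eval']
  apply h
  rw [eval_eq_eval_mv_eval', finSuccEquiv_R2, Polynomial.map_neg, Polynomial.map_sub,
    Polynomial.map_pow, Polynomial.map_X, Polynomial.map_C, Polynomial.eval_neg,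
    Polynomial.eval_sub, Polynomial.eval_pow, Polynomial.eval_X, Polynomial.eval_C, ht, sub_self,
    neg_zero]

/-- Non-degeneracy of the Bessel–Fischer product on the Fock space `ℂ[z]/⟨R²⟩`
for `m ≥ 4`: if `⟨p, q⟩_B = 0` for all `q`, then `p = 0` in the quotient. -/
theorem stmt14 (m : ℕ) (hm : 4 ≤ m) (p : Pm m)
    (h : ∀ q : Pm m, BF m p q = 0) : p ∈ Ideal.span {R2 m} :=
  mem_span_R2_of_forall_eval_eq_zero (by omega) fun _ hv =>
    eval_eq_zero_of_forall_BF_eq_zero (by omega) h hv
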